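/- arXiv:2109.11186 — 5 statements merged into one kernel-verified Lean document; each statement's English description precedes it below -/
import Mathlib

section
/- Let n ≥ 1 and let s be an n-bit string. Define ψ : ((Fin n → ZMod 2) × ZMod 2) → ℂ by ψ(a,b) = 2^{−n/2} if b = a·s and ψ(a,b) = 0 otherwise (the noiseless quantum sample state over all 2^n inputs). Then for every n-bit string 𝐤 and bit k*, the (n+1)-bit Walsh–Hadamard transform satisfies (W_{n+1} ψ)(𝐤, k*) = 1/√2 if 𝐤 = k*·s (componentwise scalar multiple in ZMod 2) and 0 otherwise. In particular, on the branch k* = 1 the transformed state is supported exactly on the secret string s. -/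
open scoped BigOperators

/-- `χ(x) = (-1)^x` for a bit `x ∈ ZMod 2`. -/
noncomputable def chi (x : ZMod 2) : ℂ := (-1 : ℂ) ^ x.val

/-- The `(n+1)`-bit Walsh–Hadamard transform, where an `(n+1)`-bit string is
identified with a pair of an `n`-bit string and a bit, and the dot product of
`(a, b)` and `(𝐤, k⋆)` is `a·𝐤 + b·k⋆`. -/
noncomputable def WH (n : ℕ) (f : ((Fin n → ZMod 2) × ZMod 2) → ℂ)
    (k : (Fin n → ZMod 2) × ZMod 2) : ℂ :=
  ((Real.sqrt (2 ^ (n + 1)) : ℝ) : ℂ)⁻¹ *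
    ∑ j : (Fin n → ZMod 2) × ZMod 2,
      chi ((∑ i, j.1 i * k.1 i) + j.2 * k.2) * f j


/-!
Summing out the last bit first, only `b = a·s` survives, and since
`a·𝐤 + (a·s)·k* = a·(𝐤 + k*·s)` the transform becomes `2^{-(2n+1)/2} ∑ₐ χ(a·(𝐤 + k*·s))`.
By orthogonality of characters the sum is `2^n` if `𝐤 + k*·s = 0`, i.e. `𝐤 = k*·s` in
characteristic two, and `0` otherwise.
-/

open Matrix

lemma AddChar.map_sum_eq_prod {ι A M : Type*} [AddCommMonoid A] [CommMonoid M]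
    (ψ : AddChar A M) (s : Finset ι) (f : ι → A) :
    ψ (∑ i ∈ s, f i) = ∏ i ∈ s, ψ (f i) := by
  classical
  induction s using Finset.induction_on with
  | empty => simp
  | insert i s hi ih => rw [Finset.sum_insert hi, Finset.prod_insert hi, ψ.map_add_eq_mul, ih]

theorem AddChar.IsPrimitive.sum_apply_dotProduct {ι R R' : Type*} [Fintype ι] [DecidableEq ι]
    [CommRing R] [Fintype R] [DecidableEq R] [CommRing R'] [IsDomain R'] {ψ : AddChar R R'}
    (hψ : ψ.IsPrimitive) (t : ι → R) :
    ∑ a : ι → R, ψ (a ⬝ᵥ t) = if t = 0 then (Fintype.card R : R') ^ Fintype.card ι else 0 := by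
  simp only [dotProduct, ψ.map_sum_eq_prod]
  rw [← Fintype.prod_sum (fun i x => ψ (x * t i))]
  simp only [AddChar.sum_mulShift _ hψ, Nat.cast_ite, Nat.cast_zero, Fintype.prod_ite_zero,
    Finset.prod_const, Finset.card_univ, funext_iff, Pi.zero_apply]

noncomputable def chiChar : AddChar (ZMod 2) ℂ := AddChar.zmodChar 2 (ζ := -1) (by norm_num)

lemma chiChar_apply (x : ZMod 2) : chiChar x = chi x := rfl

lemma chiChar_isPrimitive : chiChar.IsPrimitive :=
  AddChar.zmodChar_primitive_of_primitive_root 2 (IsPrimitiveRoot.neg_one 0 (by norm_num))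

lemma sum_chi_dotProduct {ι : Type*} [Fintype ι] [DecidableEq ι] (t : ι → ZMod 2) :
    ∑ a : ι → ZMod 2, chi (a ⬝ᵥ t) = if t = 0 then (2 : ℂ) ^ Fintype.card ι else 0 := by
  simpa [chiChar_apply] using chiChar_isPrimitive.sum_apply_dotProduct t

lemma WH_apply (n : ℕ) (f : ((Fin n → ZMod 2) × ZMod 2) → ℂ) (k : Fin n → ZMod 2)
    (kstar : ZMod 2) :
    WH n f (k, kstar) = ((Real.sqrt (2 ^ (n + 1)) : ℝ) : ℂ)⁻¹ *
      ∑ a, ∑ b, chi (a ⬝ᵥ k + b * kstar) * f (a, b) := by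
  rw [WH, Fintype.sum_prod_type]
  rfl

lemma inv_sqrt_two_pow_succ_mul (n : ℕ) :
    (√(2 ^ (n + 1)))⁻¹ * (2 ^ n * (√(2 ^ n))⁻¹) = (√2)⁻¹ := by
  rw [pow_succ, Real.sqrt_mul (by positivity)]
  field_simp
  rw [Real.sq_sqrt (by positivity)]

theorem noiseless_sample_WH_general (n : ℕ) (s : Fin n → ZMod 2)
    (ψ : ((Fin n → ZMod 2) × ZMod 2) → ℂ)
    (hψ : ∀ a b, ψ (a, b) =
      if b = ∑ i, a i * s i then ((Real.sqrt (2 ^ n) : ℝ) : ℂ)⁻¹ else 0)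
    (k : Fin n → ZMod 2) (kstar : ZMod 2) :
    WH n ψ (k, kstar) =
      if k = fun i => kstar * s i then ((Real.sqrt 2 : ℝ) : ℂ)⁻¹ else 0 := by
  have hfiber : ∀ a : Fin n → ZMod 2, ∑ b, chi (a ⬝ᵥ k + b * kstar) * ψ (a, b) =
      chi (a ⬝ᵥ (k + kstar • s)) * ((√(2 ^ n) : ℝ) : ℂ)⁻¹ := by
    intro a
    simp only [hψ, mul_ite, mul_zero, Finset.sum_ite_eq', Finset.mem_univ, if_true]
    rw [dotProduct_add, dotProduct_smul, smul_eq_mul, mul_comm kstar]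
    rfl
  have hker : k + kstar • s = 0 ↔ k = fun i => kstar * s i := by
    simp only [funext_iff, Pi.add_apply, Pi.smul_apply, smul_eq_mul, Pi.zero_apply,
      CharTwo.add_eq_zero]
  rw [WH_apply, Finset.sum_congr rfl fun a _ => hfiber a, ← Finset.sum_mul, sum_chi_dotProduct,
    Fintype.card_fin]
  simp only [hker]
  split_ifs
  · exact_mod_cast inv_sqrt_two_pow_succ_mul n
  · rw [zero_mul, mul_zero]

/-- The Walsh–Hadamard transform of the noiseless quantum sample state
`ψ(a,b) = 2^{-n/2} · [b = a·s]` is `1/√2` on `(𝐤, k⋆)` with `𝐤 = k⋆·s`,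
and `0` elsewhere. -/
theorem noiseless_sample_WH (n : ℕ) (hn : 1 ≤ n) (s : Fin n → ZMod 2)
    (ψ : ((Fin n → ZMod 2) × ZMod 2) → ℂ)
    (hψ : ∀ a b, ψ (a, b) =
      if b = ∑ i, a i * s i then ((Real.sqrt (2 ^ n) : ℝ) : ℂ)⁻¹ else 0)
    (k : Fin n → ZMod 2) (kstar : ZMod 2) :
    WH n ψ (k, kstar) =
      if k = fun i => kstar * s i then ((Real.sqrt 2 : ℝ) : ℂ)⁻¹ else 0 :=
  noiseless_sample_WH_general n s ψ hψ k kstar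
end

section
/- Let n ≥ 1, let s be an n-bit string, let A be a finite set of n-bit strings with |A| = 2^q, and let e : A → ZMod 2 be noise bits. Let ψ be the associated noisy quantum sample state. Then for every n-bit string 𝐤 and bit k*, the (n+1)-bit Walsh–Hadamard transform satisfies (W_{n+1} ψ)(𝐤, k*) = 2^{−(q+n+1)/2} · ∑_{a ∈ A} χ( a·𝐤 + (a·s + e(a))·k* ). -/
open scoped BigOperators

/-- The Walsh–Hadamard transform of the noisy quantum sample state on sample
set `A`, `|A| = 2^q`, with secret `s` and noise bits `e`, is
`(W ψ)(𝐤, k⋆) = 2^{-(q+n+1)/2} ∑_{a ∈ A} χ(a·𝐤 + (a·s + e(a))·k⋆)`. -/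
theorem noisy_sample_WH (n q : ℕ) (hn : 1 ≤ n) (hq : q ≤ n)
    (s : Fin n → ZMod 2) (A : Finset (Fin n → ZMod 2)) (hA : A.card = 2 ^ q)
    (e : (Fin n → ZMod 2) → ZMod 2)
    (ψ : ((Fin n → ZMod 2) × ZMod 2) → ℂ)
    (hψ : ∀ a b, ψ (a, b) =
      if a ∈ A ∧ b = (∑ i, a i * s i) + e a then
        ((Real.sqrt (2 ^ q) : ℝ) : ℂ)⁻¹ else 0)
    (k : Fin n → ZMod 2) (kstar : ZMod 2) :
    WH n ψ (k, kstar) =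
      ((Real.sqrt (2 ^ (q + n + 1)) : ℝ) : ℂ)⁻¹ *
        ∑ a ∈ A, chi ((∑ i, a i * k i) + ((∑ i, a i * s i) + e a) * kstar) := by
  have key : ∑ j : (Fin n → ZMod 2) × ZMod 2,
      chi ((∑ i, j.1 i * k i) + j.2 * kstar) * ψ j
      = ((Real.sqrt (2 ^ q) : ℝ) : ℂ)⁻¹ *
        ∑ a ∈ A, chi ((∑ i, a i * k i) + ((∑ i, a i * s i) + e a) * kstar) := by
    rw [Fintype.sum_prod_type]
    have h1 : ∀ a : Fin n → ZMod 2,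
        (∑ b : ZMod 2, chi ((∑ i, a i * k i) + b * kstar) * ψ (a, b))
        = if a ∈ A then ((Real.sqrt (2 ^ q) : ℝ) : ℂ)⁻¹ *
            chi ((∑ i, a i * k i) + ((∑ i, a i * s i) + e a) * kstar) else 0 := by
      intro a
      simp only [hψ]
      by_cases ha : a ∈ A
      · simp only [ha, true_and, if_true, mul_ite, mul_zero]
        rw [Fintype.sum_ite_eq' ((∑ i, a i * s i) + e a)
          (fun b => chi ((∑ i, a i * k i) + b * kstar) * ((Real.sqrt (2 ^ q) : ℝ) : ℂ)⁻¹)]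
        ring
      · simp [ha]
    simp only [h1]
    rw [Finset.sum_ite_mem, Finset.univ_inter, Finset.mul_sum]
  rw [WH]
  rw [key, ← mul_assoc]
  congr 1
  rw [← mul_inv]
  congr 1
  rw [← Complex.ofReal_mul]
  congr 1
  rw [← Real.sqrt_mul (by positivity)]
  congr 1
  rw [← pow_add]
  ring_nf
end

section
/- Let n ≥ 1, let s be an n-bit string, let A be a set of n-bit strings with |A| = 2^q, let e : A → ZMod 2 be noise bits, and let ψ be the associated noisy quantum sample state. Then the probability of the algorithm outputting the true secret, P_S = |(W_{n+1} ψ)(s, 1)|², equals 2^{−(n+q+1)} · | ∑_{a ∈ A} χ(e(a)) |². -/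
open scoped BigOperators

/-!
Evaluating the transform at `(s, 1)`, the row `a ∈ A` of `ψ` has its single nonzero
entry at `b = a·s + e(a)`, where the character is `χ(a·s + b) = χ(e(a))` because `a·s + a·s = 0`
over `ZMod 2`. So `(W ψ)(s, 1) = 2^{-(n+1)/2} 2^{-q/2} ∑_{a ∈ A} χ(e(a))`; take squared norms.
-/

theorem WH_apply_fst_snd_one (n : ℕ) (f : ((Fin n → ZMod 2) × ZMod 2) → ℂ)
    (s : Fin n → ZMod 2) :
    WH n f (s, 1) = ((Real.sqrt (2 ^ (n + 1)) : ℝ) : ℂ)⁻¹ *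
      ∑ a, ∑ b, chi ((∑ i, a i * s i) + b) * f (a, b) := by
  simp only [WH, Fintype.sum_prod_type, mul_one]

theorem sum_chi_add_mul_ite_eq_add (x y : ZMod 2) (c : ℂ) :
    ∑ b : ZMod 2, chi (x + b) * (if b = x + y then c else 0) = c * chi y := by
  rw [Finset.sum_eq_single_of_mem (x + y) (Finset.mem_univ _) (fun b _ hb => by simp [hb]),
    if_pos rfl, ← add_assoc, CharTwo.add_self_eq_zero, zero_add, mul_comm]

theorem norm_inv_ofReal_sqrt_sq {x : ℝ} (hx : 0 ≤ x) :
    ‖((Real.sqrt x : ℝ) : ℂ)⁻¹‖ ^ 2 = x⁻¹ := by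
  rw [norm_inv, Complex.norm_real, Real.norm_of_nonneg (Real.sqrt_nonneg x), inv_pow,
    Real.sq_sqrt hx]

theorem WH_noisySample_apply_secret_one (n q : ℕ) (s : Fin n → ZMod 2)
    (A : Finset (Fin n → ZMod 2)) (e : (Fin n → ZMod 2) → ZMod 2)
    (ψ : ((Fin n → ZMod 2) × ZMod 2) → ℂ)
    (hψ : ∀ a b, ψ (a, b) =
      if a ∈ A ∧ b = (∑ i, a i * s i) + e a then
        ((Real.sqrt (2 ^ q) : ℝ) : ℂ)⁻¹ else 0) :
    WH n ψ (s, 1) = ((Real.sqrt (2 ^ (n + 1)) : ℝ) : ℂ)⁻¹ *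
      (((Real.sqrt (2 ^ q) : ℝ) : ℂ)⁻¹ * ∑ a ∈ A, chi (e a)) := by
  have row : ∀ a, ∑ b, chi ((∑ i, a i * s i) + b) * ψ (a, b) =
      if a ∈ A then ((Real.sqrt (2 ^ q) : ℝ) : ℂ)⁻¹ * chi (e a) else 0 := by
    intro a
    by_cases ha : a ∈ A
    · simp only [hψ, ha, true_and, if_true, sum_chi_add_mul_ite_eq_add]
    · simp [hψ, ha]
  rw [WH_apply_fst_snd_one, Finset.sum_congr rfl (fun a _ => row a), Finset.sum_ite_mem,
    Finset.univ_inter, ← Finset.mul_sum]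

theorem success_probability_general (n q : ℕ)
    (s : Fin n → ZMod 2) (A : Finset (Fin n → ZMod 2))
    (e : (Fin n → ZMod 2) → ZMod 2)
    (ψ : ((Fin n → ZMod 2) × ZMod 2) → ℂ)
    (hψ : ∀ a b, ψ (a, b) =
      if a ∈ A ∧ b = (∑ i, a i * s i) + e a then
        ((Real.sqrt (2 ^ q) : ℝ) : ℂ)⁻¹ else 0) :
    ‖WH n ψ (s, 1)‖ ^ 2 =
      ((2 : ℝ) ^ (n + q + 1))⁻¹ * ‖∑ a ∈ A, chi (e a)‖ ^ 2 := by
  rw [WH_noisySample_apply_secret_one n q s A e ψ hψ, norm_mul, norm_mul, mul_pow, mul_pow,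
    norm_inv_ofReal_sqrt_sq (by positivity), norm_inv_ofReal_sqrt_sq (by positivity),
    ← mul_assoc, ← mul_inv, ← pow_add, Nat.add_right_comm]

/-- The success probability of the quantum NBLP algorithm:
`P_S = |(W ψ)(s, 1)|² = 2^{-(n+q+1)} |∑_{a ∈ A} χ(e(a))|²`. -/
theorem success_probability (n q : ℕ) (hn : 1 ≤ n) (hq : q ≤ n)
    (s : Fin n → ZMod 2) (A : Finset (Fin n → ZMod 2)) (hA : A.card = 2 ^ q)
    (e : (Fin n → ZMod 2) → ZMod 2)
    (ψ : ((Fin n → ZMod 2) × ZMod 2) → ℂ)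
    (hψ : ∀ a b, ψ (a, b) =
      if a ∈ A ∧ b = (∑ i, a i * s i) + e a then
        ((Real.sqrt (2 ^ q) : ℝ) : ℂ)⁻¹ else 0) :
    ‖WH n ψ (s, 1)‖ ^ 2 =
      ((2 : ℝ) ^ (n + q + 1))⁻¹ * ‖∑ a ∈ A, chi (e a)‖ ^ 2 :=
  success_probability_general n q s A e ψ hψ
end

section
/- Let n ≥ 1, let s be an n-bit string, let A be a set of n-bit strings with |A| = 2^q, let e : A → ZMod 2 be noise bits, and let ψ be the associated noisy quantum sample state. Then for every nonzero n-bit string φ, the probability of the algorithm outputting the false candidate s + φ satisfies P_F = |(W_{n+1} ψ)(s + φ, 1)|² = 2^{−(n+q+1)} · | ∑_{a ∈ A} χ( a·φ + e(a) ) |². -/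
open scoped BigOperators

/-!
Only the bit `b = a·s + e(a)` contributes to the inner sum over `b` in `(W ψ)(s + φ, 1)`, and
there the character is `χ(a·(s + φ) + a·s + e(a)) = χ(a·φ + e(a))`, because `a·s` cancels in
characteristic two. The normalisations `2^{-(n+1)/2}` and `2^{-q/2}` square to `2^{-(n+q+1)}`.
-/

theorem WH_graph_state (n : ℕ) (A : Finset (Fin n → ZMod 2)) (g : (Fin n → ZMod 2) → ZMod 2)
    (c : ℂ) (f : ((Fin n → ZMod 2) × ZMod 2) → ℂ)
    (hf : ∀ a b, f (a, b) = if a ∈ A ∧ b = g a then c else 0)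
    (k : Fin n → ZMod 2) (t : ZMod 2) :
    WH n f (k, t) =
      ((Real.sqrt (2 ^ (n + 1)) : ℝ) : ℂ)⁻¹ * (c * ∑ a ∈ A, chi (a ⬝ᵥ k + g a * t)) := by
  have inner_sum : ∀ a, ∑ b : ZMod 2, chi (a ⬝ᵥ k + b * t) * f (a, b) =
      if a ∈ A then c * chi (a ⬝ᵥ k + g a * t) else 0 := by
    intro a
    by_cases ha : a ∈ A
    · simp only [hf, ha, true_and, mul_ite, mul_zero, Finset.sum_ite_eq', Finset.mem_univ,
        if_true]
      exact mul_comm _ _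
    · simp [hf, ha]
  unfold WH
  rw [Fintype.sum_prod_type]
  simp only [← dotProduct.eq_1, inner_sum, Finset.sum_ite_mem, Finset.univ_inter, Finset.mul_sum]

theorem chi_dot_add_shift_cancel {n : ℕ} (a s φ : Fin n → ZMod 2) (x : ZMod 2) :
    chi (a ⬝ᵥ (s + φ) + (a ⬝ᵥ s + x) * 1) = chi (a ⬝ᵥ φ + x) := by
  have hss := CharTwo.add_self_eq_zero (a ⬝ᵥ s)
  rw [dotProduct_add]
  congr 1
  linear_combination hss

theorem norm_inv_sqrt_mul_sq {x : ℝ} (hx : 0 ≤ x) (z : ℂ) :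
    ‖((Real.sqrt x : ℝ) : ℂ)⁻¹ * z‖ ^ 2 = x⁻¹ * ‖z‖ ^ 2 := by
  rw [norm_mul, norm_inv, Complex.norm_real, Real.norm_of_nonneg (Real.sqrt_nonneg x), mul_pow,
    inv_pow, Real.sq_sqrt hx]

theorem false_candidate_probability_general (n q : ℕ)
    (s : Fin n → ZMod 2) (A : Finset (Fin n → ZMod 2))
    (e : (Fin n → ZMod 2) → ZMod 2)
    (ψ : ((Fin n → ZMod 2) × ZMod 2) → ℂ)
    (hψ : ∀ a b, ψ (a, b) =
      if a ∈ A ∧ b = (∑ i, a i * s i) + e a then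
        ((Real.sqrt (2 ^ q) : ℝ) : ℂ)⁻¹ else 0)
    (φ : Fin n → ZMod 2) :
    ‖WH n ψ (s + φ, 1)‖ ^ 2 =
      ((2 : ℝ) ^ (n + q + 1))⁻¹ *
        ‖∑ a ∈ A, chi ((∑ i, a i * φ i) + e a)‖ ^ 2 := by
  rw [WH_graph_state n A (fun a => a ⬝ᵥ s + e a) _ ψ hψ]
  simp only [chi_dot_add_shift_cancel]
  rw [norm_inv_sqrt_mul_sq (by positivity), norm_inv_sqrt_mul_sq (by positivity), ← mul_assoc,
    ← mul_inv, ← pow_add, Nat.add_right_comm]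
  rfl

/-- The probability of the quantum NBLP algorithm outputting a false candidate
`s + φ` (`φ ≠ 0`):
`P_F = |(W ψ)(s + φ, 1)|² = 2^{-(n+q+1)} |∑_{a ∈ A} χ(a·φ + e(a))|²`. -/
theorem false_candidate_probability (n q : ℕ) (hn : 1 ≤ n) (hq : q ≤ n)
    (s : Fin n → ZMod 2) (A : Finset (Fin n → ZMod 2)) (hA : A.card = 2 ^ q)
    (e : (Fin n → ZMod 2) → ZMod 2)
    (ψ : ((Fin n → ZMod 2) × ZMod 2) → ℂ)
    (hψ : ∀ a b, ψ (a, b) =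
      if a ∈ A ∧ b = (∑ i, a i * s i) + e a then
        ((Real.sqrt (2 ^ q) : ℝ) : ℂ)⁻¹ else 0)
    (φ : Fin n → ZMod 2) (hφ : φ ≠ 0) :
    ‖WH n ψ (s + φ, 1)‖ ^ 2 =
      ((2 : ℝ) ^ (n + q + 1))⁻¹ *
        ‖∑ a ∈ A, chi ((∑ i, a i * φ i) + e a)‖ ^ 2 :=
  false_candidate_probability_general n q s A e ψ hψ φ
end

section
/- Let (Ω, μ) be a probability space, η ∈ (0, 1/2], and let e_1, …, e_{2^q} be independent {0,1}-valued random variables with μ(e_i = 0) = 1/2 + η. Let n ≥ q ≥ 0 and define the (random) success probability P_S(ω) = 2^{−(n−q+1)} · ( (1/2^q) ∑_{i=1}^{2^q} (−1)^{e_i(ω)} )². Then for every t with 0 < t < 2η, μ({ω : P_S(ω) > 2^{−(n−q+1)} · (2η − t)²}) ≥ 1 − 2·exp(−2^{q−1}·t²). In other words, the lower bound P_S > P_{S,inf} := (2η − t)² / 2^{n−q+1} holds except with probability at most 2·exp(−2^{q−1} t²) over the noise. -/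
/-!
The signs `(-1)^{e_i}` are independent, take values in `[-1, 1]` and have mean `2η`, so by
Hoeffding's inequality their average is at most `2η - t` with probability at most
`exp(-2^{q-1} t²)`. Off that event the average exceeds `2η - t > 0`, and squaring it bounds `P_S`
from below.
-/

open MeasureTheory ProbabilityTheory

namespace ProbabilityTheory

variable {Ω : Type*} [MeasurableSpace Ω] {μ : Measure Ω} [IsProbabilityMeasure μ]

lemma measure_sum_le_sum_integral_sub_le_of_iIndepFun {ι : Type*} [Fintype ι]
    {X : ι → Ω → ℝ} (h_indep : iIndepFun X μ) (h_meas : ∀ i, AEMeasurable (X i) μ) {a b : ℝ}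
    (h_bound : ∀ i, ∀ᵐ ω ∂μ, X i ω ∈ Set.Icc a b) {ε : ℝ} (hε : 0 ≤ ε) :
    μ.real {ω | ∑ i, X i ω ≤ ∑ i, μ[X i] - ε} ≤
      Real.exp (-2 * ε ^ 2 / (Fintype.card ι * (b - a) ^ 2)) := by
  set Y : ι → Ω → ℝ := fun i ω ↦ μ[X i] - X i ω
  have h_subG : ∀ i ∈ (Finset.univ : Finset ι),
      HasSubgaussianMGF (Y i) ((‖b - a‖₊ / 2) ^ 2) μ := by
    intro i _
    convert (hasSubgaussianMGF_of_mem_Icc (h_meas i) (h_bound i)).neg using 1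
    ext ω
    simp only [Pi.neg_apply, neg_sub, Y]
  have h_indepY : iIndepFun Y μ :=
    h_indep.comp (fun i (x : ℝ) ↦ ∫ ω, X i ω ∂μ - x) fun _ ↦ measurable_const.sub measurable_id
  have h_set : {ω | ∑ i, X i ω ≤ ∑ i, μ[X i] - ε} = {ω | ε ≤ ∑ i, Y i ω} := by
    ext ω
    simp only [Set.mem_ofPred_eq, Y, Finset.sum_sub_distrib]
    constructor <;> intro h <;> linarith
  have h_var : ((∑ _i : ι, (‖b - a‖₊ / 2) ^ 2 : NNReal) : ℝ) =
      Fintype.card ι * (b - a) ^ 2 / 4 := by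
    simp only [div_pow, Finset.sum_const, Finset.card_univ, nsmul_eq_mul, NNReal.coe_mul,
      NNReal.coe_natCast, NNReal.coe_div, NNReal.coe_pow, coe_nnnorm, Real.norm_eq_abs, sq_abs,
      NNReal.coe_ofNat]
    ring
  rw [h_set]
  refine (HasSubgaussianMGF.measure_sum_ge_le_of_iIndepFun h_indepY h_subG hε).trans_eq ?_
  rw [h_var, show ∀ x : ℝ, 2 * (x / 4) = x / 2 by intro x; ring, div_div_eq_mul_div]
  ring_nf

lemma integral_neg_one_pow_val {e : Ω → ZMod 2} (he : Measurable e) :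
    μ[fun ω ↦ (-1 : ℝ) ^ (e ω).val] = 2 * μ.real {ω | e ω = 0} - 1 := by
  have h_pt : ∀ ω, (-1 : ℝ) ^ (e ω).val = 2 * {ω | e ω = 0}.indicator 1 ω - 1 := by
    intro ω
    obtain h | h := (by decide : ∀ x : ZMod 2, x = 0 ∨ x = 1) (e ω)
    all_goals norm_num [h, ZMod.val_one]
  have h_meas : MeasurableSet {ω | e ω = 0} := he (measurableSet_singleton 0)
  simp_rw [h_pt]
  rw [integral_sub (((integrable_const 1).indicator h_meas).const_mul 2) (integrable_const 1),
    integral_const_mul, integral_indicator_one h_meas]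
  simp

lemma one_sub_measure_le_of_compl_subset {s t : Set Ω} (h : sᶜ ⊆ t) : 1 - μ s ≤ μ t := by
  rw [tsub_le_iff_right, ← measure_univ (μ := μ), ← Set.compl_union_self s]
  exact (measure_union_le _ _).trans (add_le_add_left (measure_mono h) _)

end ProbabilityTheory

theorem success_probability_concentration_general {Ω : Type*} [MeasurableSpace Ω]
    (μ : Measure Ω) [IsProbabilityMeasure μ]
    (η : ℝ) (n q : ℕ)
    (e : Fin (2 ^ q) → Ω → ZMod 2) (hmeas : ∀ i, Measurable (e i))
    (hindep : iIndepFun e μ)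
    (h0 : ∀ i, μ {ω | e i ω = 0} = ENNReal.ofReal (1 / 2 + η))
    (PS : Ω → ℝ)
    (hPS : ∀ ω, PS ω = ((2 : ℝ) ^ (n - q + 1))⁻¹ *
      ((1 / (2 : ℝ) ^ q) * ∑ i, (-1 : ℝ) ^ (e i ω).val) ^ 2)
    (t : ℝ) (ht : 0 < t) (ht' : t < 2 * η) :
    1 - ENNReal.ofReal (2 * Real.exp (-((2 : ℝ) ^ q / 2) * t ^ 2)) ≤
      μ {ω | ((2 : ℝ) ^ (n - q + 1))⁻¹ * (2 * η - t) ^ 2 < PS ω} := by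
  set X : Fin (2 ^ q) → Ω → ℝ := fun i ω ↦ (-1 : ℝ) ^ (e i ω).val
  have h_mean : ∀ i, μ[X i] = 2 * η := fun i ↦ by
    rw [integral_neg_one_pow_val (hmeas i), measureReal_def, h0 i,
      ENNReal.toReal_ofReal (by linarith)]
    ring
  have h_sign_meas : Measurable fun x : ZMod 2 ↦ (-1 : ℝ) ^ x.val := measurable_of_finite _
  have h_tail := measure_sum_le_sum_integral_sub_le_of_iIndepFun (X := X)
    (hindep.comp _ fun _ ↦ h_sign_meas) (fun i ↦ (h_sign_meas.comp (hmeas i)).aemeasurable)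
    (a := -1) (b := 1) (fun i ↦ ae_of_all _ fun ω ↦ abs_le.mp (abs_neg_one_pow (e i ω).val).le)
    (ε := 2 ^ q * t) (by positivity)
  have h_threshold : ∑ i, μ[X i] - 2 ^ q * t = 2 ^ q * (2 * η - t) := by
    simp only [h_mean, Finset.sum_const, Finset.card_univ, Fintype.card_fin, nsmul_eq_mul,
      Nat.cast_pow, Nat.cast_ofNat]
    ring
  have h_exponent : -2 * (2 ^ q * t) ^ 2 / (Fintype.card (Fin (2 ^ q)) * (1 - -1) ^ 2) =
      -((2 : ℝ) ^ q / 2) * t ^ 2 := by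
    rw [Fintype.card_fin]
    push_cast
    field_simp
    ring
  rw [h_threshold, h_exponent] at h_tail
  have h_good : {ω | ∑ i, X i ω ≤ 2 ^ q * (2 * η - t)}ᶜ ⊆
      {ω | ((2 : ℝ) ^ (n - q + 1))⁻¹ * (2 * η - t) ^ 2 < PS ω} := by
    intro ω hω
    have h_avg : 2 * η - t < 1 / (2 : ℝ) ^ q * ∑ i, X i ω := by
      rw [one_div_mul_eq_div, lt_div_iff₀ (by positivity), mul_comm]
      exact not_le.mp hω
    have h_pos : 0 ≤ 2 * η - t := by linarith
    rw [Set.mem_ofPred_eq, hPS ω]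
    gcongr
  calc 1 - ENNReal.ofReal (2 * Real.exp (-((2 : ℝ) ^ q / 2) * t ^ 2))
      ≤ 1 - μ {ω | ∑ i, X i ω ≤ 2 ^ q * (2 * η - t)} := by
        gcongr
        refine (ENNReal.le_ofReal_iff_toReal_le (measure_ne_top _ _) (by positivity)).mpr ?_
        exact h_tail.trans (by linarith [Real.exp_pos (-((2 : ℝ) ^ q / 2) * t ^ 2)])
    _ ≤ _ := one_sub_measure_le_of_compl_subset h_good

/-- Concentration of the success probability: with `2^q` independent noise bits
`e_i` (`μ(e_i = 0) = 1/2 + η`, `η ∈ (0, 1/2]`) and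
`P_S(ω) = 2^{-(n-q+1)} ((1/2^q) ∑_i (-1)^{e_i(ω)})²`, for every `0 < t < 2η`
the bound `P_S > (2η - t)²/2^{n-q+1}` holds except with probability at most
`2·exp(-2^{q-1} t²)`. -/
theorem success_probability_concentration {Ω : Type*} [MeasurableSpace Ω]
    (μ : Measure Ω) [IsProbabilityMeasure μ]
    (η : ℝ) (hη : 0 < η) (hη' : η ≤ 1 / 2) (n q : ℕ) (hq : q ≤ n)
    (e : Fin (2 ^ q) → Ω → ZMod 2) (hmeas : ∀ i, Measurable (e i))
    (hindep : iIndepFun e μ)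
    (h0 : ∀ i, μ {ω | e i ω = 0} = ENNReal.ofReal (1 / 2 + η))
    (h1 : ∀ i, μ {ω | e i ω = 1} = ENNReal.ofReal (1 / 2 - η))
    (PS : Ω → ℝ)
    (hPS : ∀ ω, PS ω = ((2 : ℝ) ^ (n - q + 1))⁻¹ *
      ((1 / (2 : ℝ) ^ q) * ∑ i, (-1 : ℝ) ^ (e i ω).val) ^ 2)
    (t : ℝ) (ht : 0 < t) (ht' : t < 2 * η) :
    1 - ENNReal.ofReal (2 * Real.exp (-((2 : ℝ) ^ q / 2) * t ^ 2)) ≤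
      μ {ω | ((2 : ℝ) ^ (n - q + 1))⁻¹ * (2 * η - t) ^ 2 < PS ω} :=
  success_probability_concentration_general μ η n q e hmeas hindep h0 PS hPS t ht ht'
end
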